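/- Let u¹, u² : ℝ³ → ℝ be smooth functions of (x, y, t) with ρ := (u¹)² + (u²)² nowhere zero, satisfying the system u¹_t + (u¹ u¹_x + u² u²_x)/ρ + (u¹ u²_y − u² u¹_y)/ρ = 0 and u²_t + (u² u¹_x − u¹ u²_x)/ρ + (u¹ u¹_y + u² u²_y)/ρ = 0. Then ρ satisfies the Boyer–Finley equation ρ_{tt} = Δ ln ρ, where Δ = ∂_x² + ∂_y². -/

import Mathlib

noncomputable def pd {n : ℕ} (i : Fin n) (f : (Fin n → ℝ) → ℝ) (p : Fin n → ℝ) : ℝ :=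
  fderiv ℝ f p (Pi.single i 1)

section PDlemmas

variable {n : ℕ} {i j : Fin n} {f g : (Fin n → ℝ) → ℝ} {q : Fin n → ℝ}

lemma pd_smooth (i : Fin n) (hf : ContDiff ℝ (⊤ : ℕ∞) f) : Differentiable ℝ (pd i f) := by
  have h : ContDiff ℝ (⊤ : ℕ∞) (fun p => fderiv ℝ f p (Pi.single i 1)) :=
    (hf.fderiv_right (m := (⊤ : ℕ∞)) (by simp)).clm_apply contDiff_const
  exact h.differentiable (by simp)

lemma pd_add (hf : DifferentiableAt ℝ f q) (hg : DifferentiableAt ℝ g q) :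
    pd i (fun x => f x + g x) q = pd i f q + pd i g q := by
  unfold pd; rw [fderiv_fun_add hf hg]; simp

lemma pd_sub (hf : DifferentiableAt ℝ f q) (hg : DifferentiableAt ℝ g q) :
    pd i (fun x => f x - g x) q = pd i f q - pd i g q := by
  unfold pd; rw [fderiv_fun_sub hf hg]; simp

lemma pd_neg : pd i (fun x => -f x) q = -pd i f q := by
  unfold pd; rw [fderiv_fun_neg]; simp

lemma pd_const (c : ℝ) : pd i (fun _ => c) q = 0 := by
  unfold pd; simp

lemma pd_mul (hf : DifferentiableAt ℝ f q) (hg : DifferentiableAt ℝ g q) :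
    pd i (fun x => f x * g x) q = f q * pd i g q + g q * pd i f q := by
  unfold pd; rw [fderiv_fun_mul hf hg]; simp

lemma pd_sq (hf : DifferentiableAt ℝ f q) :
    pd i (fun x => f x ^ 2) q = 2 * f q * pd i f q := by
  have e : (fun x => f x ^ 2) = fun x => f x * f x := by funext x; ring
  rw [e, pd_mul hf hf]; ring

lemma pd_inv (hf : DifferentiableAt ℝ f q) (h0 : f q ≠ 0) :
    pd i (fun x => (f x)⁻¹) q = -(pd i f q / f q ^ 2) := by
  have h := fderiv_comp (𝕜 := ℝ) q (differentiableAt_inv h0) hf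
  unfold pd
  rw [show (fun x => (f x)⁻¹) = Inv.inv ∘ f from rfl, h, fderiv_inv' h0]
  simp [ContinuousLinearMap.comp_apply]
  field_simp

lemma pd_div (hf : DifferentiableAt ℝ f q) (hg : DifferentiableAt ℝ g q) (h0 : g q ≠ 0) :
    pd i (fun x => f x / g x) q = (pd i f q * g q - f q * pd i g q) / g q ^ 2 := by
  have e : (fun x => f x / g x) = fun x => f x * (g x)⁻¹ := by
    funext x; rw [div_eq_mul_inv]
  rw [e, pd_mul (g := fun x => (g x)⁻¹) hf (hg.inv h0), pd_inv hg h0]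
  field_simp
  ring

lemma pd_log (hf : DifferentiableAt ℝ f q) (h0 : f q ≠ 0) :
    pd i (fun x => Real.log (f x)) q = pd i f q / f q := by
  unfold pd; rw [fderiv.log hf h0]; simp [div_eq_inv_mul]

lemma pd_comm (i j : Fin n) (hf : ContDiff ℝ (⊤ : ℕ∞) f) (q : Fin n → ℝ) :
    pd i (pd j f) q = pd j (pd i f) q := by
  have hdf : Differentiable ℝ (fderiv ℝ f) :=
    (hf.fderiv_right (m := (⊤ : ℕ∞)) (by simp)).differentiable (by simp)
  have key : ∀ v w : Fin n → ℝ,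
      fderiv ℝ (fun p => fderiv ℝ f p v) q w = fderiv ℝ (fderiv ℝ f) q w v := by
    intro v w
    rw [fderiv_clm_apply (hdf q) (differentiableAt_const v)]
    simp
  have hsym : IsSymmSndFDerivAt ℝ f q := hf.contDiffAt.isSymmSndFDerivAt (by rw [minSmoothness_of_isRCLikeNormedField]; exact (WithTop.coe_le_coe.mpr (le_top : (2 : ℕ∞) ≤ ⊤)))
  unfold pd
  rw [key, key]
  exact hsym.eq _ _

end PDlemmas

/-- The two-component first-order form of the Boyer–Finley equation:
ρ = (u¹)² + (u²)² satisfies ρ_tt = Δ ln ρ. -/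
theorem BF_from_two_component_system
    (u1 u2 : (Fin 3 → ℝ) → ℝ) (hu1 : ContDiff ℝ (⊤ : ℕ∞) u1) (hu2 : ContDiff ℝ (⊤ : ℕ∞) u2)
    (hpos : ∀ q : Fin 3 → ℝ, 0 < (u1 q) ^ 2 + (u2 q) ^ 2)
    (h1 : ∀ q : Fin 3 → ℝ,
      pd 2 u1 q + (u1 q * pd 0 u1 q + u2 q * pd 0 u2 q) / ((u1 q) ^ 2 + (u2 q) ^ 2)
        + (u1 q * pd 1 u2 q - u2 q * pd 1 u1 q) / ((u1 q) ^ 2 + (u2 q) ^ 2) = 0)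
    (h2 : ∀ q : Fin 3 → ℝ,
      pd 2 u2 q + (u2 q * pd 0 u1 q - u1 q * pd 0 u2 q) / ((u1 q) ^ 2 + (u2 q) ^ 2)
        + (u1 q * pd 1 u1 q + u2 q * pd 1 u2 q) / ((u1 q) ^ 2 + (u2 q) ^ 2) = 0) :
    ∀ q : Fin 3 → ℝ,
      pd 2 (pd 2 (fun r => (u1 r) ^ 2 + (u2 r) ^ 2)) q =
        pd 0 (pd 0 (fun r => Real.log ((u1 r) ^ 2 + (u2 r) ^ 2))) q
          + pd 1 (pd 1 (fun r => Real.log ((u1 r) ^ 2 + (u2 r) ^ 2))) q := by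
  have hne : ∀ r, (u1 r) ^ 2 + (u2 r) ^ 2 ≠ 0 := fun r => (hpos r).ne'
  have hD1 : Differentiable ℝ u1 := hu1.differentiable (by simp)
  have hD2 : Differentiable ℝ u2 := hu2.differentiable (by simp)
  have hP10 : Differentiable ℝ (pd 0 u1) := pd_smooth _ hu1
  have hP11 : Differentiable ℝ (pd 1 u1) := pd_smooth _ hu1
  have hP12 : Differentiable ℝ (pd 2 u1) := pd_smooth _ hu1
  have hP20 : Differentiable ℝ (pd 0 u2) := pd_smooth _ hu2
  have hP21 : Differentiable ℝ (pd 1 u2) := pd_smooth _ hu2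
  have hP22 : Differentiable ℝ (pd 2 u2) := pd_smooth _ hu2
  -- first-order consequences of the system
  have e1 : ∀ r, pd 2 u1 r =
      -((u1 r * pd 0 u1 r + u2 r * pd 0 u2 r) / ((u1 r) ^ 2 + (u2 r) ^ 2))
        - (u1 r * pd 1 u2 r - u2 r * pd 1 u1 r) / ((u1 r) ^ 2 + (u2 r) ^ 2) := by
    intro r; linarith [h1 r]
  have e2 : ∀ r, pd 2 u2 r =
      -((u2 r * pd 0 u1 r - u1 r * pd 0 u2 r) / ((u1 r) ^ 2 + (u2 r) ^ 2))
        - (u1 r * pd 1 u1 r + u2 r * pd 1 u2 r) / ((u1 r) ^ 2 + (u2 r) ^ 2) := by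
    intro r; linarith [h2 r]
  have ht1_fun : pd 2 u1 = fun r =>
      (u2 r * pd 1 u1 r - u1 r * pd 0 u1 r - u2 r * pd 0 u2 r - u1 r * pd 1 u2 r)
        / ((u1 r) ^ 2 + (u2 r) ^ 2) := by
    funext r; rw [e1 r]; field_simp; ring
  have ht2_fun : pd 2 u2 = fun r =>
      (u1 r * pd 0 u2 r - u2 r * pd 0 u1 r - u1 r * pd 1 u1 r - u2 r * pd 1 u2 r)
        / ((u1 r) ^ 2 + (u2 r) ^ 2) := by
    funext r; rw [e2 r]; field_simp; ring
  -- ρ_t = -2 (u1_x + u2_y)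
  have hρt_fun : pd 2 (fun r => (u1 r) ^ 2 + (u2 r) ^ 2)
      = fun r => (-2 : ℝ) * (pd 0 u1 r + pd 1 u2 r) := by
    funext r
    simp (disch := first | exact hne _ | fun_prop) only [pd_add, pd_sq]
    rw [e1 r, e2 r]
    field_simp [hne r]
    ring
  -- first x- and y- derivatives of log ρ
  have hlog0_fun : pd 0 (fun r => Real.log ((u1 r) ^ 2 + (u2 r) ^ 2))
      = fun r => (2 * (u1 r * pd 0 u1 r) + 2 * (u2 r * pd 0 u2 r))
          / ((u1 r) ^ 2 + (u2 r) ^ 2) := by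
    funext r
    simp (disch := first | exact hne _ | fun_prop) only [pd_log, pd_add, pd_sq]
    ring
  have hlog1_fun : pd 1 (fun r => Real.log ((u1 r) ^ 2 + (u2 r) ^ 2))
      = fun r => (2 * (u1 r * pd 1 u1 r) + 2 * (u2 r * pd 1 u2 r))
          / ((u1 r) ^ 2 + (u2 r) ^ 2) := by
    funext r
    simp (disch := first | exact hne _ | fun_prop) only [pd_log, pd_add, pd_sq]
    ring
  intro q
  rw [hρt_fun, hlog0_fun, hlog1_fun]
  simp (disch := first | exact hne _ | fun_prop) only
    [pd_add, pd_sub, pd_neg, pd_mul, pd_div, pd_sq, pd_const]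
  rw [pd_comm 2 0 hu1 q, pd_comm 2 1 hu2 q, ht1_fun, ht2_fun]
  simp (disch := first | exact hne _ | fun_prop) only
    [pd_add, pd_sub, pd_neg, pd_mul, pd_div, pd_sq, pd_const]
  simp only [pd_comm 1 0 hu1 q, pd_comm 1 0 hu2 q]
  field_simp [hne q]
  ring
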